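/- Let H be a complex Hilbert space and let C, T : H → H be bounded linear operators with ‖C‖ ≤ 1 (i.e., C is a contraction). Then w(TC + C*T) ≤ 2 w(T), where C* is the adjoint of C. -/

import Mathlib

/-!
Write `u = C x` for a unit vector `x`. Then `⟪(TC + C*T) x, x⟫ = ⟪T u, x⟫ + ⟪T x, u⟫`, and polarization
expresses twice this as `⟪T (u + x), u + x⟫ - ⟪T (u - x), u - x⟫`. Bounding both terms by the numerical
radius and applying the parallelogram law gives `|⟪(TC + C*T) x, x⟫| ≤ w(T) (‖u‖² + ‖x‖²) ≤ 2 w(T)`.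
-/

noncomputable def numRadius {H : Type*} [NormedAddCommGroup H] [InnerProductSpace ℂ H]
    (T : H →L[ℂ] H) : ℝ :=
  sSup {r : ℝ | ∃ x : H, ‖x‖ = 1 ∧ r = ‖(inner ℂ (T x) x : ℂ)‖}

theorem inner_map_add_inner_map_polarization {𝕜 E : Type*} [RCLike 𝕜] [NormedAddCommGroup E]
    [InnerProductSpace 𝕜 E] (T : E →ₗ[𝕜] E) (u x : E) :
    (2 : 𝕜) * (inner 𝕜 (T u) x + inner 𝕜 (T x) u)
      = inner 𝕜 (T (u + x)) (u + x) - inner 𝕜 (T (u - x)) (u - x) := by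
  simp only [map_add, map_sub, inner_add_left, inner_add_right, inner_sub_left, inner_sub_right]
  ring

section numRadius

variable {H : Type*} [NormedAddCommGroup H] [InnerProductSpace ℂ H]

theorem numRadius_nonneg (T : H →L[ℂ] H) : 0 ≤ numRadius T :=
  Real.sSup_nonneg fun _ ⟨_, _, hr⟩ => hr ▸ norm_nonneg _

theorem numRadius_le {T : H →L[ℂ] H} {c : ℝ} (hc : 0 ≤ c)
    (h : ∀ x : H, ‖x‖ = 1 → ‖(inner ℂ (T x) x : ℂ)‖ ≤ c) : numRadius T ≤ c :=
  Real.sSup_le (fun _ ⟨x, hx, hr⟩ => hr ▸ h x hx) hc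

theorem bddAbove_norm_inner_map_self_sphere (T : H →L[ℂ] H) :
    BddAbove {r : ℝ | ∃ x : H, ‖x‖ = 1 ∧ r = ‖(inner ℂ (T x) x : ℂ)‖} := by
  refine ⟨‖T‖, ?_⟩
  rintro r ⟨x, hx, rfl⟩
  calc ‖(inner ℂ (T x) x : ℂ)‖ ≤ ‖T x‖ * ‖x‖ := norm_inner_le_norm _ _
    _ ≤ ‖T‖ * ‖x‖ * ‖x‖ := by gcongr; exact T.le_opNorm x
    _ = ‖T‖ := by rw [hx, mul_one, mul_one]

theorem norm_inner_map_self_le_numRadius_of_norm_eq_one (T : H →L[ℂ] H) {x : H} (hx : ‖x‖ = 1) :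
    ‖(inner ℂ (T x) x : ℂ)‖ ≤ numRadius T :=
  le_csSup (bddAbove_norm_inner_map_self_sphere T) ⟨x, hx, rfl⟩

theorem norm_inner_map_self_le_numRadius_mul_sq (T : H →L[ℂ] H) (y : H) :
    ‖(inner ℂ (T y) y : ℂ)‖ ≤ numRadius T * ‖y‖ ^ 2 := by
  rcases eq_or_ne y 0 with rfl | hy
  · simp
  have hy' : ‖y‖ ≠ 0 := norm_ne_zero_iff.mpr hy
  have hx : ‖(‖y‖⁻¹ : ℂ) • y‖ = 1 := by
    rw [norm_smul, norm_inv, Complex.norm_real, norm_norm, inv_mul_cancel₀ hy']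
  have hscale : ‖(inner ℂ (T ((‖y‖⁻¹ : ℂ) • y)) ((‖y‖⁻¹ : ℂ) • y) : ℂ)‖
      = ‖(inner ℂ (T y) y : ℂ)‖ / ‖y‖ ^ 2 := by
    simp only [map_smul, inner_smul_left, inner_smul_right, norm_mul, RCLike.norm_conj, norm_inv,
      Complex.norm_real, norm_norm]
    field_simp
  have := norm_inner_map_self_le_numRadius_of_norm_eq_one T hx
  rw [hscale, div_le_iff₀ (by positivity)] at this
  exact this

theorem norm_inner_map_add_inner_map_le_numRadius_mul (T : H →L[ℂ] H) (u x : H) :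
    ‖(inner ℂ (T u) x + inner ℂ (T x) u : ℂ)‖ ≤ numRadius T * (‖u‖ ^ 2 + ‖x‖ ^ 2) := by
  have hpar : ‖u + x‖ ^ 2 + ‖u - x‖ ^ 2 = 2 * (‖u‖ ^ 2 + ‖x‖ ^ 2) := by
    simpa only [sq, two_mul, add_mul] using parallelogram_law_with_norm ℂ u x
  have key : 2 * ‖(inner ℂ (T u) x + inner ℂ (T x) u : ℂ)‖
      ≤ 2 * (numRadius T * (‖u‖ ^ 2 + ‖x‖ ^ 2)) :=
    calc 2 * ‖(inner ℂ (T u) x + inner ℂ (T x) u : ℂ)‖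
        = ‖(2 : ℂ) * (inner ℂ (T u) x + inner ℂ (T x) u)‖ := by rw [norm_mul, Complex.norm_two]
      _ = ‖(inner ℂ (T (u + x)) (u + x) : ℂ) - inner ℂ (T (u - x)) (u - x)‖ := by
          congr 1; exact inner_map_add_inner_map_polarization (T : H →ₗ[ℂ] H) u x
      _ ≤ numRadius T * ‖u + x‖ ^ 2 + numRadius T * ‖u - x‖ ^ 2 :=
          (norm_sub_le _ _).trans (add_le_add (norm_inner_map_self_le_numRadius_mul_sq T _)
            (norm_inner_map_self_le_numRadius_mul_sq T _))
      _ = 2 * (numRadius T * (‖u‖ ^ 2 + ‖x‖ ^ 2)) := by rw [← mul_add, hpar]; ring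
  linarith

end numRadius

theorem numRadius_contraction_ineq
    {H : Type*} [NormedAddCommGroup H] [InnerProductSpace ℂ H] [CompleteSpace H]
    (C T : H →L[ℂ] H) (hC : ‖C‖ ≤ 1) :
    numRadius (T.comp C + (ContinuousLinearMap.adjoint C).comp T) ≤ 2 * numRadius T := by
  refine numRadius_le (by linarith [numRadius_nonneg T]) fun x hx => ?_
  have hCx : ‖C x‖ ≤ 1 := by simpa [hx] using C.le_of_opNorm_le hC x
  have hinner : (inner ℂ ((T.comp C + (ContinuousLinearMap.adjoint C).comp T) x) x : ℂ)
      = inner ℂ (T (C x)) x + inner ℂ (T x) (C x) := by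
    rw [add_apply, inner_add_left, ContinuousLinearMap.comp_apply,
      ContinuousLinearMap.comp_apply, ContinuousLinearMap.adjoint_inner_left]
  calc ‖(inner ℂ ((T.comp C + (ContinuousLinearMap.adjoint C).comp T) x) x : ℂ)‖
      ≤ numRadius T * (‖C x‖ ^ 2 + ‖x‖ ^ 2) := by
        rw [hinner]; exact norm_inner_map_add_inner_map_le_numRadius_mul T (C x) x
    _ ≤ numRadius T * 2 := by
        gcongr
        · exact numRadius_nonneg T
        · nlinarith [norm_nonneg (C x)]
    _ = 2 * numRadius T := mul_comm _ _
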